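/- Let μ be a 3-Ahlfors regular vampiric measure on the first Heisenberg group ℍ (with (X,t)·(Y,s) = (X+Y, t+s+½(X₁Y₂−X₂Y₁))). Then for any 𝐗 = (X,t_X), 𝐘 = (Y,t_Y) ∈ supp μ, the point Σ_𝐗(𝐘) := (2X−Y, t_Y + X₂Y₁ − Y₂X₁) belongs to supp μ, and μ(B_r(Σ_𝐗(𝐘))) = μ(B_r(𝐘)) for all r > 0. -/

import Mathlib

open MeasureTheory

/-- Heisenberg group product on ℍ = ℝ² × ℝ. -/
noncomputable def hMul (p q : (ℝ × ℝ) × ℝ) : (ℝ × ℝ) × ℝ :=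
  ((p.1.1 + q.1.1, p.1.2 + q.1.2),
    p.2 + q.2 + (p.1.1 * q.1.2 - p.1.2 * q.1.1) / 2)

/-- Heisenberg group inverse. -/
noncomputable def hInv (p : (ℝ × ℝ) × ℝ) : (ℝ × ℝ) × ℝ :=
  ((-p.1.1, -p.1.2), -p.2)

/-- The Heisenberg norm `‖(X,t)‖ = √(|X|² + |t|)`. -/
noncomputable def hNorm (p : (ℝ × ℝ) × ℝ) : ℝ :=
  Real.sqrt (p.1.1 ^ 2 + p.1.2 ^ 2 + |p.2|)

/-- The left-invariant Heisenberg distance `d(𝐗,𝐘) = ‖𝐘⁻¹·𝐗‖`. -/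
noncomputable def hDist (p q : (ℝ × ℝ) × ℝ) : ℝ := hNorm (hMul (hInv q) p)

/-- Heisenberg ball. -/
def hBall (p : (ℝ × ℝ) × ℝ) (r : ℝ) : Set ((ℝ × ℝ) × ℝ) := {q | hDist q p < r}

/-- Support of a measure on ℍ. -/
def hSupp (μ : Measure ((ℝ × ℝ) × ℝ)) : Set ((ℝ × ℝ) × ℝ) :=
  {p | ∀ r > (0 : ℝ), 0 < μ (hBall p r)}

/-- A measure on ℍ is vampiric if convolutions against compactly supported,
Lipschitz, spatially odd functions vanish on its support. -/
def IsVampiricH (μ : Measure ((ℝ × ℝ) × ℝ)) : Prop :=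
  ∀ ψ : (ℝ × ℝ) × ℝ → ℝ,
    (∃ K : ℝ, ∀ p q, |ψ p - ψ q| ≤ K * hDist p q) →
    HasCompactSupport ψ →
    (∀ (X : ℝ × ℝ) (t : ℝ), ψ ((-X.1, -X.2), t) = -ψ (X, t)) →
    ∀ p ∈ hSupp μ, ∫ q, ψ (hMul (hInv q) p) ∂μ = 0

/-- `3`-Ahlfors regularity with respect to Heisenberg balls. -/
def IsADR3 (C₀ : ℝ) (μ : Measure ((ℝ × ℝ) × ℝ)) : Prop :=
  ∀ p ∈ hSupp μ, ∀ r : ℝ, 0 < r →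
    ENNReal.ofReal (C₀⁻¹ * r ^ 3) ≤ μ (hBall p r) ∧
      μ (hBall p r) ≤ ENNReal.ofReal (C₀ * r ^ 3)

/-!
Fix `𝐗 ∈ supp μ` and `w ∈ ℍ`, and put `P = 𝐗·w`, `Q = 𝐗·w̄`. For a Lipschitz ramp `φ`, the
function `ψ(z) = φ(‖z·w‖²) - φ(‖z·w̄‖²)` is odd in the horizontal variable (because
`z̄·w̄` is the reflection of `z·w`), Lipschitz for the Heisenberg distance and compactly
supported, and `‖(q⁻¹·𝐗)·w‖ = d(q, P)`. The vampiric condition at `𝐗` therefore gives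
`∫ φ(d(q,P)²) dμ = ∫ φ(d(q,Q)²) dμ`. Letting `φ` increase to the indicator of `[0, r²)`
yields `μ(B_r(P)) ≤ μ(B_r(Q))`, and equality by the symmetry `w ↔ w̄`. For `w = 𝐗⁻¹·𝐘` one
has `P = 𝐘` and `Q = Σ_𝐗(𝐘)`. The integrals are finite because the upper Ahlfors bound makes
`μ` locally finite.
-/

section

variable {α : Type*} [MeasurableSpace α] {μ : Measure α} {s : Set α} {f : α → ℝ}

lemma integrable_indicator_one (hs : MeasurableSet s) (hμs : μ s ≠ ⊤) :
    Integrable (s.indicator (1 : α → ℝ)) μ :=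
  (integrable_indicator_iff hs).2 (integrableOn_const (C := (1 : ℝ)) hμs)

lemma measureReal_le_integral (hs : MeasurableSet s) (hμs : μ s ≠ ⊤) (hf : Integrable f μ)
    (h : s.indicator 1 ≤ f) : μ.real s ≤ ∫ x, f x ∂μ := by
  rw [← integral_indicator_one hs]
  exact integral_mono (integrable_indicator_one hs hμs) hf h

lemma integral_le_measureReal (hs : MeasurableSet s) (hμs : μ s ≠ ⊤) (hf : Integrable f μ)
    (h : f ≤ s.indicator 1) : ∫ x, f x ∂μ ≤ μ.real s := by
  rw [← integral_indicator_one hs]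
  exact integral_mono hf (integrable_indicator_one hs hμs) h

end

namespace Heisenberg

local notation "ℍ" => (ℝ × ℝ) × ℝ

/-- The paper's `Z̄ = (-Z, t_Z)`. -/
def hBar (p : ℍ) : ℍ := ((-p.1.1, -p.1.2), p.2)

def hHoriz (p : ℍ) : ℝ := |p.1.1| + |p.1.2|

lemma hNorm_nonneg (p : ℍ) : 0 ≤ hNorm p := Real.sqrt_nonneg _

lemma hNorm_sq (p : ℍ) : hNorm p ^ 2 = p.1.1 ^ 2 + p.1.2 ^ 2 + |p.2| :=
  Real.sq_sqrt (by positivity)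

lemma abs_fst_fst_le_hNorm (p : ℍ) : |p.1.1| ≤ hNorm p :=
  Real.abs_le_sqrt (by nlinarith [abs_nonneg p.2])

lemma abs_fst_snd_le_hNorm (p : ℍ) : |p.1.2| ≤ hNorm p :=
  Real.abs_le_sqrt (by nlinarith [abs_nonneg p.2])

lemma abs_snd_le_hNorm_sq (p : ℍ) : |p.2| ≤ hNorm p ^ 2 := by
  rw [hNorm_sq]; nlinarith

lemma hHoriz_le (p : ℍ) : hHoriz p ≤ 2 * hNorm p := by
  unfold hHoriz
  linarith [abs_fst_fst_le_hNorm p, abs_fst_snd_le_hNorm p]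

lemma hNorm_hInv (p : ℍ) : hNorm (hInv p) = hNorm p := by
  simp [hNorm, hInv]

lemma hNorm_hBar (p : ℍ) : hNorm (hBar p) = hNorm p := by
  simp [hNorm, hBar]

lemma hBar_hBar (p : ℍ) : hBar (hBar p) = p := by
  simp [hBar]

lemma hMul_hBar (p q : ℍ) : hMul (hBar p) (hBar q) = hBar (hMul p q) := by
  ext <;> simp only [hMul, hBar] <;> ring

lemma hDist_comm (p q : ℍ) : hDist p q = hDist q p := by
  rw [hDist, hDist, ← hNorm_hInv]
  congr 1
  ext <;> simp only [hMul, hInv] <;> ring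

lemma hNorm_hMul_sq_le (a b : ℍ) :
    hNorm (hMul a b) ^ 2 ≤ hNorm a ^ 2 + hNorm b ^ 2 + 3 * hNorm a * hHoriz b := by
  obtain ⟨⟨a₁, a₂⟩, s⟩ := a
  obtain ⟨⟨b₁, b₂⟩, t⟩ := b
  have h₁ := abs_fst_fst_le_hNorm ((a₁, a₂), s)
  have h₂ := abs_fst_snd_le_hNorm ((a₁, a₂), s)
  have hN := hNorm_nonneg ((a₁, a₂), s)
  set N := hNorm ((a₁, a₂), s)
  have hcross : |(a₁ * b₂ - a₂ * b₁) / 2| ≤ N * (|b₁| + |b₂|) / 2 := by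
    have := abs_sub (a₁ * b₂) (a₂ * b₁)
    rw [abs_mul, abs_mul] at this
    rw [abs_div, abs_two]
    nlinarith [abs_nonneg b₁, abs_nonneg b₂]
  have hlin : a₁ * b₁ + a₂ * b₂ ≤ N * (|b₁| + |b₂|) := by
    nlinarith [le_abs_self (a₁ * b₁), le_abs_self (a₂ * b₂), abs_mul a₁ b₁, abs_mul a₂ b₂,
      abs_nonneg b₁, abs_nonneg b₂]
  rw [hNorm_sq, hNorm_sq, hNorm_sq]
  simp only [hMul, hHoriz]
  nlinarith [abs_add_three s t ((a₁ * b₂ - a₂ * b₁) / 2),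
    mul_nonneg hN (add_nonneg (abs_nonneg b₁) (abs_nonneg b₂))]

lemma hNorm_hMul_le (a b : ℍ) : hNorm (hMul a b) ≤ 2 * (hNorm a + hNorm b) := by
  have ha := hNorm_nonneg a
  have hb := hNorm_nonneg b
  refine (pow_le_pow_iff_left₀ (hNorm_nonneg _) (by positivity) two_ne_zero).1 ?_
  nlinarith [hNorm_hMul_sq_le a b, hHoriz_le b]

lemma hMul_hInv_hMul (w h : ℍ) :
    hMul (hMul (hInv w) h) w = (h.1, h.2 + (h.1.1 * w.1.2 - h.1.2 * w.1.1)) := by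
  ext <;> simp only [hMul, hInv] <;> ring

lemma hNorm_conj_sq_le (w h : ℍ) :
    hNorm (hMul (hMul (hInv w) h) w) ^ 2 ≤ hNorm h ^ 2 + hNorm w * hHoriz h := by
  have h₁ := abs_fst_fst_le_hNorm w
  have h₂ := abs_fst_snd_le_hNorm w
  have hcross := abs_sub (h.1.1 * w.1.2) (h.1.2 * w.1.1)
  have hsum := abs_add_le h.2 (h.1.1 * w.1.2 - h.1.2 * w.1.1)
  rw [hMul_hInv_hMul, hNorm_sq, hNorm_sq]
  simp only [hHoriz, abs_mul] at *
  nlinarith [abs_nonneg h.1.1, abs_nonneg h.1.2]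

lemma hHoriz_conj (w h : ℍ) : hHoriz (hMul (hMul (hInv w) h) w) = hHoriz h := by
  rw [hMul_hInv_hMul]; rfl

lemma hMul_eq_hMul_conj (z z' w : ℍ) :
    hMul z w = hMul (hMul z' w) (hMul (hMul (hInv w) (hMul (hInv z') z)) w) := by
  ext <;> simp only [hMul, hInv] <;> ring

lemma hNorm_hMul_sq_sub_le (z z' w : ℍ) :
    hNorm (hMul z w) ^ 2 - hNorm (hMul z' w) ^ 2
      ≤ hDist z z' ^ 2 + 2 * (hNorm w + 3 * hNorm (hMul z' w)) * hDist z z' := by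
  set h := hMul (hInv z') z
  have hd : hDist z z' = hNorm h := rfl
  have hmul := hNorm_hMul_sq_le (hMul z' w) (hMul (hMul (hInv w) h) w)
  have hconj := hNorm_conj_sq_le w h
  have hhoriz := mul_le_mul_of_nonneg_left (hHoriz_le h)
    (add_nonneg (hNorm_nonneg w) (mul_nonneg zero_le_three (hNorm_nonneg (hMul z' w))))
  rw [hHoriz_conj] at hmul
  rw [hMul_eq_hMul_conj z z' w, hd]
  nlinarith

/-- Right translations are not Lipschitz, so `z ↦ ‖z·w‖²` is only locally Lipschitz;
truncating at `r²` makes the bound global. -/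
lemma min_hNorm_hMul_sq_sub_le (w : ℍ) {r : ℝ} (hr : 0 ≤ r) (z z' : ℍ) :
    min (hNorm (hMul z w) ^ 2) (r ^ 2) - min (hNorm (hMul z' w) ^ 2) (r ^ 2)
      ≤ (r ^ 2 + 6 * r + 2 * hNorm w + 1) * hDist z z' := by
  set d := hDist z z'
  have hd : 0 ≤ d := hNorm_nonneg _
  have hw := hNorm_nonneg w
  have hK : 0 ≤ (r ^ 2 + 6 * r + 2 * hNorm w + 1) * d := by positivity
  rcases le_or_gt (r ^ 2) (hNorm (hMul z' w) ^ 2) with hfar | hnear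
  · rw [min_eq_right hfar]
    linarith [min_le_right (hNorm (hMul z w) ^ 2) (r ^ 2)]
  have hu : hNorm (hMul z' w) ≤ r :=
    (pow_le_pow_iff_left₀ (hNorm_nonneg _) hr two_ne_zero).1 hnear.le
  rw [min_eq_left hnear.le]
  rcases le_or_gt 1 d with hd1 | hd1
  · nlinarith [min_le_right (hNorm (hMul z w) ^ 2) (r ^ 2), sq_nonneg (hNorm (hMul z' w))]
  · nlinarith [min_le_left (hNorm (hMul z w) ^ 2) (r ^ 2), hNorm_hMul_sq_sub_le z z' w]

def IsHLipschitz (f : ℍ → ℝ) : Prop := ∃ K : ℝ, ∀ p q, |f p - f q| ≤ K * hDist p q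

lemma IsHLipschitz.sub {f g : ℍ → ℝ} (hf : IsHLipschitz f) (hg : IsHLipschitz g) :
    IsHLipschitz (f - g) := by
  obtain ⟨K, hK⟩ := hf
  obtain ⟨L, hL⟩ := hg
  refine ⟨K + L, fun p q => ?_⟩
  calc |(f - g) p - (f - g) q| = |(f p - f q) - (g p - g q)| := by
        simp only [Pi.sub_apply]; ring_nf
    _ ≤ |f p - f q| + |g p - g q| := abs_sub _ _
    _ ≤ (K + L) * hDist p q := by linarith [hK p q, hL p q]

def ramp (c a x : ℝ) : ℝ := max 0 (min 1 (c * (a - x)))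

lemma ramp_nonneg (c a x : ℝ) : 0 ≤ ramp c a x := le_max_left _ _

lemma ramp_le_one (c a x : ℝ) : ramp c a x ≤ 1 := max_le zero_le_one (min_le_left _ _)

lemma ramp_eq_zero {c a x : ℝ} (hc : 0 ≤ c) (hx : a ≤ x) : ramp c a x = 0 :=
  max_eq_left ((min_le_right _ _).trans (mul_nonpos_of_nonneg_of_nonpos hc (by linarith)))

lemma ramp_eq_one {c a x : ℝ} (hx : 1 ≤ c * (a - x)) : ramp c a x = 1 := by
  rw [ramp, min_eq_left hx, max_eq_right zero_le_one]

lemma ramp_min {c a : ℝ} (hc : 0 ≤ c) (x : ℝ) : ramp c a (min x a) = ramp c a x := by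
  rcases le_total x a with hx | hx
  · rw [min_eq_left hx]
  · rw [min_eq_right hx, ramp_eq_zero hc le_rfl, ramp_eq_zero hc hx]

lemma abs_ramp_sub_ramp_le {c : ℝ} (hc : 0 ≤ c) (a x y : ℝ) :
    |ramp c a x - ramp c a y| ≤ c * |min x a - min y a| := by
  rw [← ramp_min hc x, ← ramp_min hc y, ramp, ramp, max_comm 0, max_comm 0]
  calc _ ≤ |min 1 (c * (a - min x a)) - min 1 (c * (a - min y a))| :=
        abs_max_sub_max_le_abs _ _ _
    _ ≤ |c * (a - min x a) - c * (a - min y a)| := by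
        simpa using abs_min_sub_min_le_max 1 (c * (a - min x a)) 1 (c * (a - min y a))
    _ = c * |min x a - min y a| := by
        rw [← mul_sub, abs_mul, abs_of_nonneg hc, ← abs_neg]; ring_nf

noncomputable def bump (c r : ℝ) (w z : ℍ) : ℝ := ramp c (r ^ 2) (hNorm (hMul z w) ^ 2)

lemma isHLipschitz_bump {c r : ℝ} (hc : 0 ≤ c) (hr : 0 ≤ r) (w : ℍ) :
    IsHLipschitz (bump c r w) := by
  refine ⟨c * (r ^ 2 + 6 * r + 2 * hNorm w + 1), fun z z' => ?_⟩
  have hmin : |min (hNorm (hMul z w) ^ 2) (r ^ 2) - min (hNorm (hMul z' w) ^ 2) (r ^ 2)|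
      ≤ (r ^ 2 + 6 * r + 2 * hNorm w + 1) * hDist z z' := by
    rw [abs_sub_le_iff]
    refine ⟨min_hNorm_hMul_sq_sub_le w hr z z', ?_⟩
    rw [hDist_comm]
    exact min_hNorm_hMul_sq_sub_le w hr z' z
  calc |bump c r w z - bump c r w z'| ≤ c * _ := abs_ramp_sub_ramp_le hc _ _ _
    _ ≤ _ := by rw [mul_assoc]; exact mul_le_mul_of_nonneg_left hmin hc

lemma bump_hBar (c r : ℝ) (w z : ℍ) : bump c r w (hBar z) = bump c r (hBar w) z := by
  rw [bump, bump, ← hBar_hBar w, hMul_hBar, hNorm_hBar, hBar_hBar]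

lemma continuous_hNorm : Continuous hNorm := by
  unfold hNorm; fun_prop

lemma isCompact_hNorm_le (R : ℝ) : IsCompact {p : ℍ | hNorm p ≤ R} := by
  refine Metric.isCompact_of_isClosed_isBounded (isClosed_le continuous_hNorm continuous_const)
    (isBounded_iff_forall_norm_le.2 ⟨max R (R ^ 2), fun p hp => ?_⟩)
  have hR : hNorm p ^ 2 ≤ R ^ 2 := pow_le_pow_left₀ (hNorm_nonneg p) hp 2
  simp only [Prod.norm_def, Real.norm_eq_abs, max_le_iff]
  refine ⟨⟨?_, ?_⟩, ?_⟩
  · exact le_max_of_le_left ((abs_fst_fst_le_hNorm p).trans hp)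
  · exact le_max_of_le_left ((abs_fst_snd_le_hNorm p).trans hp)
  · exact le_max_of_le_right ((abs_snd_le_hNorm_sq p).trans hR)

lemma hasCompactSupport_bump {c : ℝ} (hc : 0 ≤ c) (r : ℝ) (w : ℍ) :
    HasCompactSupport (bump c r w) := by
  refine HasCompactSupport.intro (isCompact_hNorm_le (2 * (|r| + hNorm w))) fun z hz => ?_
  have hz' : 2 * (|r| + hNorm w) < hNorm (hMul (hMul z w) (hInv w)) := by
    have hzw : hMul (hMul z w) (hInv w) = z := by
      ext <;> simp only [hMul, hInv] <;> ring
    rw [hzw]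
    simpa using hz
  have hfar : |r| ≤ hNorm (hMul z w) := by
    linarith [hNorm_hMul_le (hMul z w) (hInv w), hNorm_hInv w]
  exact ramp_eq_zero hc (sq_le_sq.2 (hfar.trans (le_abs_self _)))

lemma continuous_hDist_left (p : ℍ) : Continuous fun q => hDist q p := by
  unfold hDist hNorm hMul hInv; fun_prop

lemma measurableSet_hBall (p : ℍ) (r : ℝ) : MeasurableSet (hBall p r) :=
  (isOpen_lt (continuous_hDist_left p) continuous_const).measurableSet

lemma hDist_le_two_mul (x p q : ℍ) : hDist q x ≤ 2 * (hDist p x + hDist q p) := by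
  have h : hMul (hInv x) q = hMul (hMul (hInv x) p) (hMul (hInv p) q) := by
    ext <;> simp only [hMul, hInv] <;> ring
  rw [hDist, h]
  exact hNorm_hMul_le _ _

lemma measure_hBall_ne_top {C₀ : ℝ} {μ : Measure ℍ} (hADR : IsADR3 C₀ μ) {x : ℍ}
    (hx : x ∈ hSupp μ) (p : ℍ) (ρ : ℝ) : μ (hBall p ρ) ≠ ⊤ := by
  set R := 2 * (hDist p x + |ρ|) + 1
  have hR : 0 < R := by have : 0 ≤ hDist p x := hNorm_nonneg _; positivity
  have hsub : hBall p ρ ⊆ hBall x R := fun q hq => by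
    have : hDist q p < |ρ| := lt_of_lt_of_le hq (le_abs_self ρ)
    show hDist q x < R
    linarith [hDist_le_two_mul x p q]
  exact ne_top_of_le_ne_top ENNReal.ofReal_ne_top ((measure_mono hsub).trans (hADR x hx R hR).2)

lemma bump_hInv_hMul (c r : ℝ) (w q x : ℍ) :
    bump c r w (hMul (hInv q) x) = ramp c (r ^ 2) (hDist q (hMul x w) ^ 2) := by
  have h : hMul (hMul (hInv q) x) w = hInv (hMul (hInv (hMul x w)) q) := by
    ext <;> simp only [hMul, hInv] <;> ring
  rw [bump, h, hNorm_hInv, hDist]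

lemma ramp_hDist_le_indicator {c r : ℝ} (hc : 0 ≤ c) (hr : 0 ≤ r) (p : ℍ) :
    (fun q => ramp c (r ^ 2) (hDist q p ^ 2)) ≤ (hBall p r).indicator 1 := fun q => by
  by_cases hq : q ∈ hBall p r
  · simpa [Set.indicator_of_mem hq] using ramp_le_one _ _ _
  · dsimp only
    rw [Set.indicator_of_notMem hq,
      ramp_eq_zero hc (pow_le_pow_left₀ hr (not_lt.1 hq) 2)]

lemma indicator_le_ramp_hDist (n : ℕ) (r : ℝ) (p : ℍ) :
    {q | hDist q p ^ 2 + 1 / ((n : ℝ) + 1) ≤ r ^ 2}.indicator 1 ≤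
      fun q => ramp (n + 1) (r ^ 2) (hDist q p ^ 2) := fun q => by
  dsimp only
  by_cases hq : q ∈ {q | hDist q p ^ 2 + 1 / ((n : ℝ) + 1) ≤ r ^ 2}
  · have hq' : 1 / ((n : ℝ) + 1) ≤ r ^ 2 - hDist q p ^ 2 := by linarith [Set.mem_ofPred.1 hq]
    rw [Set.indicator_of_mem hq, Pi.one_apply, ramp_eq_one ((div_le_iff₀' (by positivity)).1 hq')]
  · rw [Set.indicator_of_notMem hq]
    exact ramp_nonneg _ _ _

lemma integrable_ramp_hDist {μ : Measure ℍ} {c r : ℝ} (hc : 0 ≤ c) (hr : 0 ≤ r) {p : ℍ}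
    (hfin : μ (hBall p r) ≠ ⊤) : Integrable (fun q => ramp c (r ^ 2) (hDist q p ^ 2)) μ := by
  refine (integrable_indicator_one (measurableSet_hBall p r) hfin).mono' ?_
    (Filter.Eventually.of_forall fun q => ?_)
  · exact (by unfold ramp; fun_prop : Continuous fun x : ℝ => ramp c (r ^ 2) x).comp
      ((continuous_hDist_left p).pow 2) |>.aestronglyMeasurable
  · rw [Real.norm_of_nonneg (ramp_nonneg _ _ _)]
    exact ramp_hDist_le_indicator hc hr p q

section Vampiric

variable {C₀ : ℝ} {μ : Measure ℍ} {x : ℍ}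

lemma integral_ramp_hDist_hMul_hBar (hvamp : IsVampiricH μ) (hADR : IsADR3 C₀ μ)
    (hx : x ∈ hSupp μ) (w : ℍ) {c r : ℝ} (hc : 0 ≤ c) (hr : 0 ≤ r) :
    ∫ q, ramp c (r ^ 2) (hDist q (hMul x w) ^ 2) ∂μ =
      ∫ q, ramp c (r ^ 2) (hDist q (hMul x (hBar w)) ^ 2) ∂μ := by
  have hodd : ∀ (Z : ℝ × ℝ) (t : ℝ),
      (bump c r w - bump c r (hBar w)) ((-Z.1, -Z.2), t) =
        -(bump c r w - bump c r (hBar w)) (Z, t) := fun Z t => by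
    change bump c r w (hBar (Z, t)) - bump c r (hBar w) (hBar (Z, t)) = _
    rw [bump_hBar, bump_hBar, hBar_hBar, Pi.sub_apply]
    ring
  have hzero := hvamp _ ((isHLipschitz_bump hc hr w).sub (isHLipschitz_bump hc hr (hBar w)))
    ((hasCompactSupport_bump hc r w).sub (hasCompactSupport_bump hc r (hBar w))) hodd x hx
  simp only [Pi.sub_apply, bump_hInv_hMul] at hzero
  rwa [integral_sub (integrable_ramp_hDist hc hr (measure_hBall_ne_top hADR hx _ _))
    (integrable_ramp_hDist hc hr (measure_hBall_ne_top hADR hx _ _)), sub_eq_zero] at hzero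

lemma measure_hBall_le_iSup (p : ℍ) (r : ℝ) :
    μ (hBall p r) ≤ ⨆ n : ℕ, μ {q | hDist q p ^ 2 + 1 / (n + 1) ≤ r ^ 2} := by
  have hmono : Monotone fun n : ℕ => {q | hDist q p ^ 2 + 1 / ((n : ℝ) + 1) ≤ r ^ 2} := by
    intro m n hmn q hq
    have hq' : hDist q p ^ 2 + 1 / ((m : ℝ) + 1) ≤ r ^ 2 := hq
    have : 1 / ((n : ℝ) + 1) ≤ 1 / ((m : ℝ) + 1) :=
      one_div_le_one_div_of_le (by positivity) (by exact_mod_cast Nat.add_le_add_right hmn 1)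
    exact (by linarith : hDist q p ^ 2 + 1 / ((n : ℝ) + 1) ≤ r ^ 2)
  rw [← hmono.measure_iUnion]
  refine measure_mono fun q hq => ?_
  have hlt : hDist q p ^ 2 < r ^ 2 := pow_lt_pow_left₀ hq (hNorm_nonneg _) two_ne_zero
  obtain ⟨n, hn⟩ := exists_nat_one_div_lt (sub_pos.2 hlt)
  exact Set.mem_iUnion.2 ⟨n, (by linarith : hDist q p ^ 2 + 1 / ((n : ℝ) + 1) ≤ r ^ 2)⟩

lemma measure_hBall_hMul_le (hvamp : IsVampiricH μ) (hADR : IsADR3 C₀ μ) (hx : x ∈ hSupp μ)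
    (w : ℍ) {r : ℝ} (hr : 0 ≤ r) :
    μ (hBall (hMul x w) r) ≤ μ (hBall (hMul x (hBar w)) r) := by
  refine (measure_hBall_le_iSup _ r).trans (iSup_le fun n => ?_)
  set S := {q | hDist q (hMul x w) ^ 2 + 1 / ((n : ℝ) + 1) ≤ r ^ 2}
  have hS : MeasurableSet S :=
    (isClosed_le (((continuous_hDist_left _).pow 2).add continuous_const)
      continuous_const).measurableSet
  have hSB : S ⊆ hBall (hMul x w) r := fun q hq => by
    have : (0 : ℝ) < 1 / ((n : ℝ) + 1) := by positivity
    have hlt : hDist q (hMul x w) ^ 2 < r ^ 2 := by linarith [Set.mem_ofPred.1 hq]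
    exact (pow_lt_pow_iff_left₀ (hNorm_nonneg _) hr two_ne_zero).1 hlt
  have hfinS := ne_top_of_le_ne_top (measure_hBall_ne_top hADR hx (hMul x w) r) (measure_mono hSB)
  have hfinQ := measure_hBall_ne_top hADR hx (hMul x (hBar w)) r
  have hc : (0 : ℝ) ≤ n + 1 := by positivity
  rw [← ENNReal.toReal_le_toReal hfinS hfinQ, ← measureReal_def, ← measureReal_def]
  calc μ.real S ≤ ∫ q, ramp (n + 1) (r ^ 2) (hDist q (hMul x w) ^ 2) ∂μ :=
        measureReal_le_integral hS hfinS (integrable_ramp_hDist hc hr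
          (measure_hBall_ne_top hADR hx _ _)) (indicator_le_ramp_hDist n r _)
    _ = ∫ q, ramp (n + 1) (r ^ 2) (hDist q (hMul x (hBar w)) ^ 2) ∂μ :=
        integral_ramp_hDist_hMul_hBar hvamp hADR hx w hc hr
    _ ≤ μ.real (hBall (hMul x (hBar w)) r) :=
        integral_le_measureReal (measurableSet_hBall _ r) hfinQ
          (integrable_ramp_hDist hc hr hfinQ) (ramp_hDist_le_indicator hc hr _)

lemma measure_hBall_hMul_hBar (hvamp : IsVampiricH μ) (hADR : IsADR3 C₀ μ) (hx : x ∈ hSupp μ)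
    (w : ℍ) {r : ℝ} (hr : 0 ≤ r) :
    μ (hBall (hMul x (hBar w)) r) = μ (hBall (hMul x w) r) := by
  refine le_antisymm ?_ (measure_hBall_hMul_le hvamp hADR hx w hr)
  simpa only [hBar_hBar] using measure_hBall_hMul_le hvamp hADR hx (hBar w) hr

end Vampiric

end Heisenberg

theorem heisenberg_vampiric_symmetry_general (C₀ : ℝ)
    (μ : Measure ((ℝ × ℝ) × ℝ)) (hvamp : IsVampiricH μ) (hADR : IsADR3 C₀ μ)
    (X Y : ℝ × ℝ) (tX tY : ℝ)
    (hX : ((X, tX) : (ℝ × ℝ) × ℝ) ∈ hSupp μ)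
    (hY : ((Y, tY) : (ℝ × ℝ) × ℝ) ∈ hSupp μ) :
    (((2 * X.1 - Y.1, 2 * X.2 - Y.2), tY + X.2 * Y.1 - Y.2 * X.1) : (ℝ × ℝ) × ℝ)
        ∈ hSupp μ ∧
    ∀ r > (0 : ℝ),
      μ (hBall ((2 * X.1 - Y.1, 2 * X.2 - Y.2), tY + X.2 * Y.1 - Y.2 * X.1) r) =
        μ (hBall (Y, tY) r) := by
  set w := hMul (hInv (X, tX)) (Y, tY)
  have hY_eq : hMul (X, tX) w = (Y, tY) := by
    ext <;> simp only [w, hMul, hInv] <;> ring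
  have hSigma_eq : hMul (X, tX) (Heisenberg.hBar w) =
      ((2 * X.1 - Y.1, 2 * X.2 - Y.2), tY + X.2 * Y.1 - Y.2 * X.1) := by
    ext <;> simp only [w, hMul, hInv, Heisenberg.hBar] <;> ring
  have hballs : ∀ r > (0 : ℝ), μ (hBall ((2 * X.1 - Y.1, 2 * X.2 - Y.2),
      tY + X.2 * Y.1 - Y.2 * X.1) r) = μ (hBall (Y, tY) r) := fun r hr => by
    rw [← hY_eq, ← hSigma_eq]
    exact Heisenberg.measure_hBall_hMul_hBar hvamp hADR hX w hr.le
  exact ⟨fun r hr => hballs r hr ▸ hY r hr, hballs⟩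

/-- For a 3-Ahlfors regular vampiric measure `μ` on the first Heisenberg group,
and `𝐗 = (X,t_X)`, `𝐘 = (Y,t_Y)` in `supp μ`, the point
`Σ_𝐗(𝐘) = (2X−Y, t_Y + X₂Y₁ − Y₂X₁)` belongs to `supp μ`, and
`μ(B_r(Σ_𝐗(𝐘))) = μ(B_r(𝐘))` for all `r > 0`. -/
theorem heisenberg_vampiric_symmetry (C₀ : ℝ) (hC₀ : 1 ≤ C₀)
    (μ : Measure ((ℝ × ℝ) × ℝ)) (hvamp : IsVampiricH μ) (hADR : IsADR3 C₀ μ)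
    (X Y : ℝ × ℝ) (tX tY : ℝ)
    (hX : ((X, tX) : (ℝ × ℝ) × ℝ) ∈ hSupp μ)
    (hY : ((Y, tY) : (ℝ × ℝ) × ℝ) ∈ hSupp μ) :
    (((2 * X.1 - Y.1, 2 * X.2 - Y.2), tY + X.2 * Y.1 - Y.2 * X.1) : (ℝ × ℝ) × ℝ)
        ∈ hSupp μ ∧
    ∀ r > (0 : ℝ),
      μ (hBall ((2 * X.1 - Y.1, 2 * X.2 - Y.2), tY + X.2 * Y.1 - Y.2 * X.1) r) =
        μ (hBall (Y, tY) r) :=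
  heisenberg_vampiric_symmetry_general C₀ μ hvamp hADR X Y tX tY hX hY
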